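/- arXiv:1407.1612 — 4 statements merged into one kernel-verified Lean document; each statement's English description precedes it below -/
import Mathlib

section
/- For mutually distinct indices i, j, k, the relation [E_ij, E_ki]·E_kj² = 1 holds in GL(n,ℤ), where [X,Y] = X⁻¹Y⁻¹XY. -/
open Matrix

def Gamma2 (n : ℕ) : Subgroup (GL (Fin n) ℤ) :=
  (Matrix.GeneralLinearGroup.map (n := Fin n) (Int.castRingHom (ZMod 2))).ker

noncomputable def Emat (n : ℕ) (i j : Fin n) : Matrix (Fin n) (Fin n) ℤ :=
  1 + 2 • Matrix.single i j 1

noncomputable def Fmat (n : ℕ) (i : Fin n) : Matrix (Fin n) (Fin n) ℤ :=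
  1 - 2 • Matrix.single i i 1

/-- The Steinberg commutator relation `[x_ki(b), x_ij(a)] = x_kj(ba)`, written without inverses. -/
theorem Matrix.transvection_mul_transvection_of_ne {ι R : Type*} [Fintype ι] [DecidableEq ι]
    [CommRing R] {i j k : ι} (hik : i ≠ k) (hjk : j ≠ k) (a b : R) :
    transvection k i b * transvection i j a =
      transvection i j a * transvection k i b * transvection k j (b * a) := by
  simp only [transvection, add_mul, mul_add, one_mul, mul_one, single_mul_single_same,
    single_mul_single_of_ne _ _ _ _ hjk, single_mul_single_of_ne _ _ _ _ hik, zero_mul]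
  abel

theorem Emat_eq_transvection (n : ℕ) (i j : Fin n) : Emat n i j = transvection i j 2 := by
  rw [Emat, transvection, smul_single, two_nsmul, one_add_one_eq_two]

theorem comm_E_ij_E_ki_mul_E_kj_sq_general (n : ℕ) (i j k : Fin n)
    (hik : i ≠ k) (hjk : j ≠ k)
    (X Y Z : GL (Fin n) ℤ)
    (hX : (X : Matrix (Fin n) (Fin n) ℤ) = Emat n i j)
    (hY : (Y : Matrix (Fin n) (Fin n) ℤ) = Emat n k i)
    (hZ : (Z : Matrix (Fin n) (Fin n) ℤ) = Emat n k j) :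
    X⁻¹ * Y⁻¹ * X * Y * Z ^ 2 = 1 := by
  have hYX : Y * X = X * Y * Z ^ 2 := by
    ext1
    rw [Units.val_mul, Units.val_mul, Units.val_mul, Units.val_pow_eq_pow_val, hX, hY, hZ,
      Emat_eq_transvection, Emat_eq_transvection, Emat_eq_transvection, sq,
      transvection_mul_transvection_same _ _ hjk.symm,
      transvection_mul_transvection_of_ne hik hjk]
    norm_num
  calc X⁻¹ * Y⁻¹ * X * Y * Z ^ 2 = X⁻¹ * Y⁻¹ * (X * Y * Z ^ 2) := by group
    _ = 1 := by rw [← hYX]; group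

theorem comm_E_ij_E_ki_mul_E_kj_sq (n : ℕ) (i j k : Fin n)
    (hij : i ≠ j) (hik : i ≠ k) (hjk : j ≠ k)
    (X Y Z : GL (Fin n) ℤ)
    (hX : (X : Matrix (Fin n) (Fin n) ℤ) = Emat n i j)
    (hY : (Y : Matrix (Fin n) (Fin n) ℤ) = Emat n k i)
    (hZ : (Z : Matrix (Fin n) (Fin n) ℤ) = Emat n k j) :
    X⁻¹ * Y⁻¹ * X * Y * Z ^ 2 = 1 :=
  comm_E_ij_E_ki_mul_E_kj_sq_general n i j k hik hjk X Y Z hX hY hZ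
end

section
/- For each t with 1 ≤ t ≤ n, the map sending A in the stabilizer of e_t in Γ₂(n) to the (n−1)×(n−1) matrix obtained by deleting the t-th row and t-th column of A is a surjective group homomorphism onto Γ₂(n−1). -/
open Matrix

/-- The subgroup of `GL (Fin n) ℤ` fixing the standard basis vector `e_t`. -/
def colStab (n : ℕ) (t : Fin n) : Subgroup (GL (Fin n) ℤ) where
  carrier := {A | (A : Matrix (Fin n) (Fin n) ℤ).mulVec (Pi.single t 1) = Pi.single t 1}
  one_mem' := by
    show ((1 : GL (Fin n) ℤ) : Matrix (Fin n) (Fin n) ℤ) *ᵥ Pi.single t 1 = Pi.single t 1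
    rw [Units.val_one, Matrix.one_mulVec]
  mul_mem' := by
    intro a b ha hb
    simp only [Set.mem_setOf_eq] at *
    rw [Units.val_mul, ← Matrix.mulVec_mulVec, hb, ha]
  inv_mem' := by
    intro a ha
    simp only [Set.mem_setOf_eq] at *
    conv_lhs => rw [← ha]
    rw [Matrix.mulVec_mulVec, ← Units.val_mul, inv_mul_cancel, Units.val_one,
      Matrix.one_mulVec]

/-- The stabilizer of `e_t` in the level 2 congruence subgroup. -/
def gamma2Stab (n : ℕ) (t : Fin n) : Subgroup (GL (Fin n) ℤ) :=
  Gamma2 n ⊓ colStab n t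

/- For `A` with `t`-th column `e_t`, the entries `(A B) i j` with `i, j ≠ t` receive no
contribution from `k = t`, so deleting row and column `t` is multiplicative on the stabilizer; it
commutes with reduction mod 2, hence maps `Γ₂(n+1)_{e_t}` into `Γ₂(n)`. A preimage of `B ∈ Γ₂(n)` is
the block matrix `diag(B, 1)` with the block `1` moved to position `t`: this insertion is a monoid
homomorphism, so it sends units to units and preserves `Γ₂`. -/

section DeleteRowCol

variable {n : ℕ}

def finSuccAboveSumEquiv (t : Fin (n + 1)) : Fin (n + 1) ≃ Fin n ⊕ Unit :=
  (finSuccEquiv' t).trans (Equiv.optionEquivSumPUnit (Fin n))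

@[simp]
theorem finSuccAboveSumEquiv_self (t : Fin (n + 1)) : finSuccAboveSumEquiv t t = Sum.inr () := by
  simp [finSuccAboveSumEquiv]

@[simp]
theorem finSuccAboveSumEquiv_succAbove (t : Fin (n + 1)) (i : Fin n) :
    finSuccAboveSumEquiv t (t.succAbove i) = Sum.inl i := by
  simp [finSuccAboveSumEquiv]

namespace Matrix

variable {R S : Type*} [Semiring R] [Semiring S]

def insertRowColHom (t : Fin (n + 1)) :
    Matrix (Fin n) (Fin n) R →* Matrix (Fin (n + 1)) (Fin (n + 1)) R where
  toFun M := (fromBlocks M 0 0 1).submatrix (finSuccAboveSumEquiv t) (finSuccAboveSumEquiv t)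
  map_one' := by simp [fromBlocks_one]
  map_mul' M N := by simp [fromBlocks_multiply]

theorem submatrix_insertRowColHom (t : Fin (n + 1)) (M : Matrix (Fin n) (Fin n) R) :
    (insertRowColHom t M).submatrix t.succAbove t.succAbove = M := by
  ext i j
  simp [insertRowColHom]

theorem insertRowColHom_mulVec_single (t : Fin (n + 1)) (M : Matrix (Fin n) (Fin n) R) :
    insertRowColHom t M *ᵥ Pi.single t 1 = Pi.single t 1 := by
  ext i
  rw [mulVec_single_one]
  cases i using Fin.succAboveCases t <;> simp [insertRowColHom, Fin.succAbove_ne]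

theorem map_insertRowColHom (t : Fin (n + 1)) (M : Matrix (Fin n) (Fin n) R) (f : R →+* S) :
    (insertRowColHom t M).map f = insertRowColHom t (M.map f) := by
  simp only [insertRowColHom, MonoidHom.coe_mk, OneHom.coe_mk, ← submatrix_map, fromBlocks_map,
    Matrix.map_zero _ f.map_zero, Matrix.map_one _ f.map_zero f.map_one]

theorem submatrix_succAbove_mul (t : Fin (n + 1)) {M : Matrix (Fin (n + 1)) (Fin (n + 1)) R}
    (hM : ∀ i ≠ t, M i t = 0) (N : Matrix (Fin (n + 1)) (Fin (n + 1)) R) :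
    (M * N).submatrix t.succAbove t.succAbove =
      M.submatrix t.succAbove t.succAbove * N.submatrix t.succAbove t.succAbove := by
  ext i j
  simp [mul_apply, Fin.sum_univ_succAbove _ t, hM _ (Fin.succAbove_ne t i)]

end Matrix

theorem mem_Gamma2_iff {A : GL (Fin n) ℤ} :
    A ∈ Gamma2 n ↔ (A : Matrix (Fin n) (Fin n) ℤ).map (Int.castRingHom (ZMod 2)) = 1 :=
  Units.ext_iff

theorem colStab_apply_ne {t : Fin n} {A : GL (Fin n) ℤ} (hA : A ∈ colStab n t) {i : Fin n}
    (hi : i ≠ t) : (A : Matrix (Fin n) (Fin n) ℤ) i t = 0 := by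
  simpa [mulVec_single_one, hi] using congrFun hA i

def deleteRowColHom (t : Fin (n + 1)) : colStab (n + 1) t →* GL (Fin n) ℤ :=
  MonoidHom.toHomUnits
    { toFun A := ((A : GL (Fin (n + 1)) ℤ) : Matrix (Fin (n + 1)) (Fin (n + 1)) ℤ).submatrix
        t.succAbove t.succAbove
      map_one' := submatrix_one _ Fin.succAbove_right_injective
      map_mul' A _ := submatrix_succAbove_mul t (fun _ => colStab_apply_ne A.2) _ }

theorem coe_deleteRowColHom (t : Fin (n + 1)) (A : colStab (n + 1) t) :
    ((deleteRowColHom t A : GL (Fin n) ℤ) : Matrix (Fin n) (Fin n) ℤ) =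
      ((A : GL (Fin (n + 1)) ℤ) : Matrix (Fin (n + 1)) (Fin (n + 1)) ℤ).submatrix
        t.succAbove t.succAbove :=
  rfl

theorem deleteRowColHom_mem_Gamma2 (t : Fin (n + 1)) (A : colStab (n + 1) t)
    (hA : (A : GL (Fin (n + 1)) ℤ) ∈ Gamma2 (n + 1)) : deleteRowColHom t A ∈ Gamma2 n := by
  rw [mem_Gamma2_iff] at hA ⊢
  rw [coe_deleteRowColHom, ← submatrix_map, hA, submatrix_one _ Fin.succAbove_right_injective]

theorem units_map_insertRowColHom_mem_gamma2Stab (t : Fin (n + 1)) {B : GL (Fin n) ℤ}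
    (hB : B ∈ Gamma2 n) : Units.map (insertRowColHom t) B ∈ gamma2Stab (n + 1) t := by
  refine ⟨mem_Gamma2_iff.2 ?_, insertRowColHom_mulVec_single t _⟩
  rw [mem_Gamma2_iff] at hB
  rw [Units.coe_map, map_insertRowColHom, hB, map_one]

def deleteRowColHomGamma2 (t : Fin (n + 1)) : gamma2Stab (n + 1) t →* Gamma2 n :=
  ((deleteRowColHom t).comp
    (Subgroup.inclusion (inf_le_right : gamma2Stab (n + 1) t ≤ colStab (n + 1) t))).codRestrict
    (Gamma2 n) fun A => deleteRowColHom_mem_Gamma2 t _ A.2.1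

theorem coe_deleteRowColHomGamma2 (t : Fin (n + 1)) (A : gamma2Stab (n + 1) t) :
    ((deleteRowColHomGamma2 t A : GL (Fin n) ℤ) : Matrix (Fin n) (Fin n) ℤ) =
      ((A : GL (Fin (n + 1)) ℤ) : Matrix (Fin (n + 1)) (Fin (n + 1)) ℤ).submatrix
        t.succAbove t.succAbove :=
  rfl

end DeleteRowCol

theorem delete_row_column_surj_hom (n : ℕ) (t : Fin (n + 1)) :
    ∃ φ : ↥(gamma2Stab (n + 1) t) →* ↥(Gamma2 n),
      Function.Surjective φ ∧
      ∀ A : ↥(gamma2Stab (n + 1) t),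
        ((φ A : GL (Fin n) ℤ) : Matrix (Fin n) (Fin n) ℤ) =
          Matrix.submatrix ((A : GL (Fin (n + 1)) ℤ) : Matrix (Fin (n + 1)) (Fin (n + 1)) ℤ)
            t.succAbove t.succAbove := by
  refine ⟨deleteRowColHomGamma2 t, ?_, coe_deleteRowColHomGamma2 t⟩
  rintro ⟨B, hB⟩
  refine ⟨⟨Units.map (insertRowColHom (R := ℤ) t) B,
    units_map_insertRowColHom_mem_gamma2Stab t hB⟩, Subtype.ext (Units.ext ?_)⟩
  exact (coe_deleteRowColHomGamma2 t _).trans (submatrix_insertRowColHom t _)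
end

section
/- The group SL(2,ℤ) admits the presentation ⟨x, y | xyxy⁻¹x⁻¹y⁻¹, (xy)⁶⟩, where x = [[1,−1],[0,1]] and y = [[1,0],[1,1]]. -/
open Matrix

def xSL : Matrix.SpecialLinearGroup (Fin 2) ℤ :=
  ⟨!![1, -1; 0, 1], by norm_num [Matrix.det_fin_two_of]⟩

def ySL : Matrix.SpecialLinearGroup (Fin 2) ℤ :=
  ⟨!![1, 0; 1, 1], by norm_num [Matrix.det_fin_two_of]⟩

/-!
Put `s = xyx` and `u = xy`. The braid relation gives `s² = u³`, and with `(xy)⁶ = 1` this element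
is central of order two; since `x = u⁻¹s` and `y = s⁻¹u²`, every element of the presented group
is `1` or `u³` times a word alternating between `s` and one of `u`, `u²`.

In SL(2,ℤ) we have `s ↦ S` and `u ↦ ST`. On integer row vectors, `S` exchanges the vectors with
coordinates of equal sign and those of opposite sign, preserving `|v₀| + |v₁|`, while `ST` and
`(ST)²` send opposite-sign vectors to equal-sign ones and strictly increase `|v₀| + |v₁|`. By
ping-pong, no alternating word other than `[]` and `[s]` maps to `±1`, so the presented group
maps injectively. Surjectivity is the classical fact that `S` and `T = x⁻¹` generate SL(2,ℤ).
-/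

lemma Subgroup.closure_pair_mul_mul_eq_closure_pair {G : Type*} [Group G] (a b : G) :
    Subgroup.closure {a * b * a, a * b} = Subgroup.closure {a, b} := by
  apply le_antisymm <;> rw [Subgroup.closure_le, Set.pair_subset_iff]
  · have ha : a ∈ Subgroup.closure {a, b} := Subgroup.subset_closure (.inl rfl)
    have hb : b ∈ Subgroup.closure {a, b} := Subgroup.subset_closure (.inr rfl)
    exact ⟨mul_mem (mul_mem ha hb) ha, mul_mem ha hb⟩
  · have hs : a * b * a ∈ Subgroup.closure {a * b * a, a * b} :=
      Subgroup.subset_closure (.inl rfl)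
    have hu : a * b ∈ Subgroup.closure {a * b * a, a * b} := Subgroup.subset_closure (.inr rfl)
    constructor
    · simpa [mul_assoc] using mul_mem (inv_mem hu) hs
    · simpa [mul_assoc] using mul_mem (inv_mem hs) (mul_mem hu hu)

lemma FreeGroup.ker_lift_eq_normalClosure {α G : Type*} [Group G] {f : α → G}
    {rels : Set (FreeGroup α)} (h : ∀ r ∈ rels, FreeGroup.lift f r = 1)
    (hinj : Function.Injective (PresentedGroup.toGroup h)) :
    (FreeGroup.lift f).ker = Subgroup.normalClosure rels := by
  refine le_antisymm (fun g hg => ?_) (PresentedGroup.closure_rels_subset_ker h)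
  rw [← PresentedGroup.mk_eq_one_iff]
  exact hinj ((MonoidHom.mem_ker.mp hg).trans (_root_.map_one _).symm)

inductive Syllable
  | s | u | u2
  deriving DecidableEq

namespace Syllable

def isS : Syllable → Bool
  | s => true
  | _ => false

variable {G : Type*} [Group G]

def eval (s u : G) : Syllable → G
  | .s => s
  | .u => u
  | .u2 => u ^ 2

def Alternating (l : List Syllable) : Prop := l.IsChain fun a b => a.isS ≠ b.isS

def word (s u : G) (l : List Syllable) : G := (l.map (eval s u)).prod

@[simp] lemma word_nil (s u : G) : word s u [] = 1 := rfl

@[simp] lemma word_cons (s u : G) (t : Syllable) (l : List Syllable) :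
    word s u (t :: l) = eval s u t * word s u l := List.prod_cons

lemma map_word {H : Type*} [Group H] (f : G →* H) (s u : G) (l : List Syllable) :
    f (word s u l) = word (f s) (f u) l := by
  induction l with
  | nil => simp
  | cons t l ih => cases t <;> simp [ih, eval]

lemma alternating_singleton (t : Syllable) : Alternating [t] := List.isChain_singleton t

lemma Alternating.tail {t : Syllable} {l : List Syllable} (h : Alternating (t :: l)) :
    Alternating l := List.IsChain.tail h

lemma Alternating.cons {t t' : Syllable} {l : List Syllable} (h : Alternating (t' :: l))
    (ht : t.isS ≠ t'.isS) : Alternating (t :: t' :: l) := List.IsChain.cons_cons ht h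

lemma Alternating.replace_head {t t' : Syllable} {l : List Syllable} (h : Alternating (t :: l))
    (ht : t'.isS = t.isS) : Alternating (t' :: l) := by
  cases l with
  | nil => exact alternating_singleton t'
  | cons r l => exact Alternating.cons h.tail (ht ▸ (List.isChain_cons_cons.mp h).1)

end Syllable

open Syllable

section NormalForm

variable {G : Type*} [Group G] {s u : G}

def normalForms (s u : G) : Set G :=
  {g | ∃ l, Alternating l ∧ (g = word s u l ∨ g = u ^ 3 * word s u l)}

lemma word_mem_normalForms {l : List Syllable} (hl : Alternating l) :
    word s u l ∈ normalForms s u := ⟨l, hl, .inl rfl⟩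

lemma u_pow_three_mul_mem_normalForms (hu : u ^ 6 = 1) {g : G} (hg : g ∈ normalForms s u) :
    u ^ 3 * g ∈ normalForms s u := by
  obtain ⟨l, hl, rfl | rfl⟩ := hg
  · exact ⟨l, hl, .inr rfl⟩
  · rw [← mul_assoc, ← pow_add, hu, one_mul]
    exact word_mem_normalForms hl

lemma s_mul_word_mem_normalForms (hsu : s ^ 2 = u ^ 3) {l : List Syllable} (hl : Alternating l) :
    s * word s u l ∈ normalForms s u := by
  match l, hl with
  | [], _ => simpa [eval] using word_mem_normalForms (s := s) (u := u) (alternating_singleton .s)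
  | .s :: l, hl => exact ⟨l, hl.tail, .inr (by simp [eval, ← hsu, sq, mul_assoc])⟩
  | .u :: l, hl => exact word_mem_normalForms (hl.cons (t := .s) (by decide))
  | .u2 :: l, hl => exact word_mem_normalForms (hl.cons (t := .s) (by decide))

lemma u_mul_word_mem_normalForms {l : List Syllable} (hl : Alternating l) :
    u * word s u l ∈ normalForms s u := by
  match l, hl with
  | [], _ => simpa [eval] using word_mem_normalForms (s := s) (u := u) (alternating_singleton .u)
  | .s :: l, hl => exact word_mem_normalForms (hl.cons (t := .u) (by decide))
  | .u :: l, hl =>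
    simpa [eval, sq, mul_assoc] using
      word_mem_normalForms (s := s) (u := u) (hl.replace_head (t' := .u2) rfl)
  | .u2 :: l, hl => exact ⟨l, hl.tail, .inr (by simp [eval, pow_succ, mul_assoc])⟩

lemma s_mul_mem_normalForms (hsu : s ^ 2 = u ^ 3) (hu : u ^ 6 = 1) {g : G}
    (hg : g ∈ normalForms s u) : s * g ∈ normalForms s u := by
  obtain ⟨l, hl, rfl | rfl⟩ := hg
  · exact s_mul_word_mem_normalForms hsu hl
  · have hcomm : Commute s (u ^ 3) := hsu ▸ Commute.self_pow s 2
    rw [← mul_assoc, hcomm.eq, mul_assoc]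
    exact u_pow_three_mul_mem_normalForms hu (s_mul_word_mem_normalForms hsu hl)

lemma u_mul_mem_normalForms (hu : u ^ 6 = 1) {g : G}
    (hg : g ∈ normalForms s u) : u * g ∈ normalForms s u := by
  obtain ⟨l, hl, rfl | rfl⟩ := hg
  · exact u_mul_word_mem_normalForms hl
  · rw [← mul_assoc, (Commute.self_pow u 3).eq, mul_assoc]
    exact u_pow_three_mul_mem_normalForms hu (u_mul_word_mem_normalForms hl)

lemma closure_subset_normalForms (hsu : s ^ 2 = u ^ 3) (hu : u ^ 6 = 1) :
    (Subgroup.closure {s, u} : Set G) ⊆ normalForms s u := by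
  have hs : s ^ 4 = 1 := by rw [show 4 = 2 * 2 from rfl, pow_mul, hsu, ← pow_mul, hu]
  have hs_inv : s⁻¹ = s * (s * s) := by
    rw [inv_eq_iff_mul_eq_one, ← hs]; simp [pow_succ, mul_assoc]
  have hu_inv : u⁻¹ = u * (u * (u * (u * u))) := by
    rw [inv_eq_iff_mul_eq_one, ← hu]; simp [pow_succ, mul_assoc]
  intro g hg
  induction hg using Subgroup.closure_induction_left with
  | one => exact word_mem_normalForms (l := []) List.isChain_nil
  | mul_left x hx y _ hy =>
    rcases hx with rfl | rfl
    · exact s_mul_mem_normalForms hsu hu hy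
    · exact u_mul_mem_normalForms hu hy
  | inv_mul_cancel x hx y _ hy =>
    rcases hx with rfl | rfl
    · rw [hs_inv, mul_assoc, mul_assoc]
      iterate 3 apply s_mul_mem_normalForms hsu hu
      exact hy
    · rw [hu_inv]
      simp only [mul_assoc]
      iterate 5 apply u_mul_mem_normalForms hu
      exact hy

end NormalForm

open ModularGroup MatrixGroups

local notation:1024 "↑ₘ" A:1024 => ((A : SL(2, ℤ)) : Matrix (Fin 2) (Fin 2) ℤ)

def l1Norm (v : Fin 2 → ℤ) : ℕ := (v 0).natAbs + (v 1).natAbs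

lemma vecMul_S (v : Fin 2 → ℤ) : v ᵥ* ↑ₘS = ![v 1, -v 0] := by
  ext i; fin_cases i <;> simp [vecMul, dotProduct, Fin.sum_univ_two]

lemma vecMul_S_mul_T (v : Fin 2 → ℤ) : v ᵥ* ↑ₘ(S * T) = ![v 1, v 1 - v 0] := by
  ext i; fin_cases i <;> simp [vecMul, dotProduct, Fin.sum_univ_two]; ring

lemma vecMul_S_mul_T_sq (v : Fin 2 → ℤ) : v ᵥ* ↑ₘ((S * T) ^ 2) = ![v 1 - v 0, -v 0] := by
  ext i; fin_cases i <;> simp [vecMul, dotProduct, Fin.sum_univ_two, sq]; ring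

namespace Syllable

def Domain (t : Syllable) (v : Fin 2 → ℤ) : Prop :=
  if t.isS then 0 < v 0 * v 1 else v 0 * v 1 < 0

lemma exists_domain (t : Syllable) : ∃ v, t.Domain v := by
  cases t
  · exact ⟨![1, 1], by simp [Domain, isS]⟩
  all_goals exact ⟨![1, -1], by simp [Domain, isS]⟩

lemma domain_vecMul_eval {t t' : Syllable} (ht : t.isS ≠ t'.isS) {v : Fin 2 → ℤ}
    (hv : t.Domain v) : t'.Domain (v ᵥ* ↑ₘ(eval S (S * T) t)) := by
  cases t <;> cases t' <;> simp only [isS, ne_eq, not_true_eq_false] at ht <;>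
    simp only [Domain, isS, eval, vecMul_S, vecMul_S_mul_T, vecMul_S_mul_T_sq, cons_val_zero,
      cons_val_one, if_true, if_false, Bool.false_eq_true] at hv ⊢
  all_goals first
    | nlinarith
    | rcases mul_neg_iff.mp hv with ⟨h0, h1⟩ | ⟨h0, h1⟩ <;> nlinarith

lemma l1Norm_vecMul_S (v : Fin 2 → ℤ) : l1Norm (v ᵥ* ↑ₘS) = l1Norm v := by
  simp only [l1Norm, vecMul_S, cons_val_zero, cons_val_one, Int.natAbs_neg]
  omega

lemma l1Norm_lt_vecMul_eval {t : Syllable} (ht : t ≠ .s) {v : Fin 2 → ℤ} (hv : t.Domain v) :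
    l1Norm v < l1Norm (v ᵥ* ↑ₘ(eval S (S * T) t)) := by
  cases t
  · exact absurd rfl ht
  all_goals
    simp only [Domain, isS, if_false, Bool.false_eq_true] at hv
    simp only [l1Norm, eval, vecMul_S_mul_T, vecMul_S_mul_T_sq, cons_val_zero, cons_val_one]
    rcases mul_neg_iff.mp hv with ⟨h0, h1⟩ | ⟨h0, h1⟩ <;> omega


lemma l1Norm_le_vecMul_word {l : List Syllable} (hl : Alternating l) {v : Fin 2 → ℤ}
    (hv : ∀ t ∈ l.head?, t.Domain v) : l1Norm v ≤ l1Norm (v ᵥ* ↑ₘ(word S (S * T) l)) := by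
  induction l generalizing v with
  | nil => simp
  | cons t l ih =>
    have ht : t.Domain v := hv t rfl
    obtain ⟨hhead, htail⟩ := List.isChain_cons.mp hl
    have hstep : l1Norm v ≤ l1Norm (v ᵥ* ↑ₘ(eval S (S * T) t)) := by
      by_cases hts : t = .s
      · subst hts; exact (l1Norm_vecMul_S v).ge
      · exact (l1Norm_lt_vecMul_eval hts ht).le
    rw [word_cons, Matrix.SpecialLinearGroup.coe_mul, ← vecMul_vecMul]
    exact hstep.trans (ih htail fun t' ht' => domain_vecMul_eval (hhead t' ht') ht)

lemma l1Norm_lt_vecMul_word_of_ne_s {t : Syllable} {l : List Syllable} (hl : Alternating (t :: l))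
    (hts : t ≠ .s) {v : Fin 2 → ℤ} (hv : t.Domain v) :
    l1Norm v < l1Norm (v ᵥ* ↑ₘ(word S (S * T) (t :: l))) := by
  obtain ⟨hhead, htail⟩ := List.isChain_cons.mp hl
  rw [word_cons, Matrix.SpecialLinearGroup.coe_mul, ← vecMul_vecMul]
  exact (l1Norm_lt_vecMul_eval hts hv).trans_le
    (l1Norm_le_vecMul_word htail fun t' ht' => domain_vecMul_eval (hhead t' ht') hv)

lemma l1Norm_lt_vecMul_word {t : Syllable} {l : List Syllable} (hl : Alternating (t :: l))
    (hne : t :: l ≠ [.s]) {v : Fin 2 → ℤ} (hv : t.Domain v) :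
    l1Norm v < l1Norm (v ᵥ* ↑ₘ(word S (S * T) (t :: l))) := by
  match t, l, hl with
  | .u, l, hl | .u2, l, hl => exact l1Norm_lt_vecMul_word_of_ne_s hl (by decide) hv
  | .s, [], _ => exact absurd rfl hne
  | .s, t' :: l, hl =>
    obtain ⟨hst', htail⟩ := List.isChain_cons_cons.mp hl
    have ht' : t' ≠ .s := by rintro rfl; exact hst' rfl
    rw [word_cons, Matrix.SpecialLinearGroup.coe_mul, ← vecMul_vecMul, ← l1Norm_vecMul_S v]
    exact l1Norm_lt_vecMul_word_of_ne_s htail ht' (domain_vecMul_eval hst' hv)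

lemma eq_nil_of_word_eq_one_or_neg_one {l : List Syllable} (hl : Alternating l)
    (h : word S (S * T) l = 1 ∨ word S (S * T) l = -1) : l = [] := by
  rcases l with _ | ⟨t, l⟩
  · rfl
  by_cases hs : t :: l = [.s]
  · rw [hs] at h
    exact absurd h (by decide)
  obtain ⟨v, hv⟩ := t.exists_domain
  have hlt := l1Norm_lt_vecMul_word hl hs hv
  rcases h with h | h <;>
    simp [h, l1Norm, Matrix.SpecialLinearGroup.coe_neg, vecMul_neg, vecMul_one] at hlt

end Syllable

theorem injective_of_map_eq_S_of_map_eq_S_mul_T {G : Type*} [Group G] {s u : G}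
    (hsu : s ^ 2 = u ^ 3) (hu : u ^ 6 = 1) (hgen : Subgroup.closure {s, u} = ⊤)
    (f : G →* SL(2, ℤ)) (hfs : f s = S) (hfu : f u = S * T) : Function.Injective f := by
  rw [injective_iff_map_eq_one]
  intro g hg
  obtain ⟨l, hl, hgl⟩ := closure_subset_normalForms hsu hu (hgen ▸ Subgroup.mem_top g)
  have hword : f (word s u l) = word S (S * T) l := by rw [map_word, hfs, hfu]
  have hfu3 : f (u ^ 3) = -1 := by rw [map_pow, hfu]; decide
  rcases hgl with rfl | rfl
  · obtain rfl := eq_nil_of_word_eq_one_or_neg_one hl (.inl (hword ▸ hg))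
    rfl
  · rw [map_mul, hfu3, hword, neg_one_mul, neg_eq_iff_eq_neg] at hg
    obtain rfl := eq_nil_of_word_eq_one_or_neg_one hl (.inr hg)
    exact absurd hg (by decide)

theorem injective_of_map_eq_xSL_of_map_eq_ySL {G : Type*} [Group G] {a b : G}
    (hgen : Subgroup.closure {a, b} = ⊤) (hbraid : a * b * a * b⁻¹ * a⁻¹ * b⁻¹ = 1)
    (hpow : (a * b) ^ 6 = 1) (f : G →* SL(2, ℤ)) (hfa : f a = xSL) (hfb : f b = ySL) :
    Function.Injective f := by
  have hbraid' : a * b * a = b * a * b := by rw [← mul_inv_eq_one, ← hbraid]; group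
  have hsu : (a * b * a) ^ 2 = (a * b) ^ 3 :=
    calc (a * b * a) ^ 2 = a * b * a * (b * a * b) := by rw [sq, hbraid']
      _ = (a * b) ^ 3 := by simp only [pow_three, mul_assoc]
  refine injective_of_map_eq_S_of_map_eq_S_mul_T hsu hpow
    (by rw [Subgroup.closure_pair_mul_mul_eq_closure_pair, hgen]) f ?_ ?_ <;>
  · simp only [map_mul, hfa, hfb]; decide

lemma closure_xSL_ySL : Subgroup.closure {xSL, ySL} = ⊤ := by
  rw [eq_top_iff, ← SpecialLinearGroup.SL2Z_generators, Subgroup.closure_le, Set.pair_subset_iff]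
  have hx : xSL ∈ Subgroup.closure {xSL, ySL} := Subgroup.subset_closure (.inl rfl)
  have hy : ySL ∈ Subgroup.closure {xSL, ySL} := Subgroup.subset_closure (.inr rfl)
  exact ⟨(show xSL * ySL * xSL = S by decide) ▸ mul_mem (mul_mem hx hy) hx,
    (show xSL⁻¹ = T by decide) ▸ inv_mem hx⟩

/-- SL(2,ℤ) = ⟨x, y ∣ xyxy⁻¹x⁻¹y⁻¹, (xy)⁶⟩ -/
theorem sl2_presentation :
    Function.Surjective (FreeGroup.lift (fun b : Fin 2 => if b = 0 then xSL else ySL)) ∧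
    (FreeGroup.lift (fun b : Fin 2 => if b = 0 then xSL else ySL)).ker =
      Subgroup.normalClosure
        ({ FreeGroup.of 0 * FreeGroup.of 1 * FreeGroup.of 0 * (FreeGroup.of 1)⁻¹ *
             (FreeGroup.of 0)⁻¹ * (FreeGroup.of 1)⁻¹,
           (FreeGroup.of 0 * FreeGroup.of 1) ^ 6 } : Set (FreeGroup (Fin 2))) := by
  constructor
  · rw [← MonoidHom.range_eq_top, eq_top_iff, ← closure_xSL_ySL, Subgroup.closure_le,
      Set.pair_subset_iff]
    exact ⟨⟨.of 0, by simp⟩, ⟨.of 1, by simp⟩⟩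
  · refine FreeGroup.ker_lift_eq_normalClosure (by
      rintro _ (rfl | rfl) <;>
        simp only [map_mul, map_inv, map_pow, FreeGroup.lift_apply_of] <;> decide)
      (injective_of_map_eq_xSL_of_map_eq_ySL (a := .of 0) (b := .of 1) ?_
        (PresentedGroup.one_of_mem (.inl rfl)) (PresentedGroup.one_of_mem (.inr rfl)) _
        (PresentedGroup.toGroup.of _) (PresentedGroup.toGroup.of _))
    rw [← PresentedGroup.closure_range_of]
    congr
    ext
    simp [Fin.exists_fin_two, eq_comm]
end

section
/- Γ₂(2) is generated by the four matrices g₁ = [[1,2],[0,1]], g₂ = [[1,2],[0,−1]], g₃ = [[1,0],[2,1]], g₄ = [[−1,0],[2,1]]. Equivalently, Γ₂(2) is generated by E₁₂, E₂₁, F₁ and F₂. -/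
/-!
Left multiplication by `g1 ^ k` adds `2k` times the second row to the first, and by `g3 ^ l`
adds `2l` times the first row to the second. For `M = [[a, b], [c, d]]` in Γ₂(2) with `c ≠ 0`,
`a` is odd and `c` even, so a balanced division gives `|a + 2kc| < |c|` (strictly, by parity),
and then `|c + 2l(a + 2kc)| ≤ |a + 2kc| < |c|`: a Euclidean descent on `|c|`. When `c = 0`,
`a` and `d` are `±1`, so `M` is a power of `g1` up to the diagonal signs `F1`, `F2`. The two
generating sets are exchanged by `g2 = g1⁻¹ F2` and `g4 = g3⁻¹ F1`.
-/

open Matrix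

def g1 : GL (Fin 2) ℤ := ⟨!![1, 2; 0, 1], !![1, -2; 0, 1], by decide, by decide⟩
def g2 : GL (Fin 2) ℤ := ⟨!![1, 2; 0, -1], !![1, 2; 0, -1], by decide, by decide⟩
def g3 : GL (Fin 2) ℤ := ⟨!![1, 0; 2, 1], !![1, 0; -2, 1], by decide, by decide⟩
def g4 : GL (Fin 2) ℤ := ⟨!![-1, 0; 2, 1], !![-1, 0; 2, 1], by decide, by decide⟩

def F1 : GL (Fin 2) ℤ := ⟨!![-1, 0; 0, 1], !![-1, 0; 0, 1], by decide, by decide⟩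
def F2 : GL (Fin 2) ℤ := ⟨!![1, 0; 0, -1], !![1, 0; 0, -1], by decide, by decide⟩

theorem mem_gamma2_two_iff {M : GL (Fin 2) ℤ} :
    M ∈ Gamma2 2 ↔ Odd (M 0 0) ∧ Even (M 0 1) ∧ Even (M 1 0) ∧ Odd (M 1 1) := by
  simp [Gamma2, Matrix.GeneralLinearGroup.ext_iff, Fin.forall_fin_two,
    Matrix.GeneralLinearGroup.map_apply, ZMod.intCast_eq_zero_iff_even,
    ZMod.intCast_eq_one_iff_odd, and_assoc]

theorem closure_le_gamma2 : Subgroup.closure {g1, g3, F1, F2} ≤ Gamma2 2 := by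
  rw [Subgroup.closure_le]
  rintro _ (rfl | rfl | rfl | rfl) <;> exact mem_gamma2_two_iff.mpr (by decide)

theorem Int.exists_natAbs_add_two_mul_mul_le (x : ℤ) {y : ℤ} (hy : y ≠ 0) :
    ∃ k : ℤ, (x + 2 * k * y).natAbs ≤ y.natAbs := by
  have hpos : 0 < (2 * y).natAbs := by omega
  obtain ⟨t, ht⟩ : 2 * y ∣ x - x.bmod (2 * y).natAbs :=
    Int.natAbs_dvd.mp (Int.ModEq.dvd Int.bmod_emod)
  have h1 := Int.le_bmod (x := x) hpos
  have h2 := Int.bmod_lt (x := x) hpos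
  refine ⟨-t, ?_⟩
  have : x + 2 * -t * y = x.bmod (2 * y).natAbs := by linear_combination ht
  omega

theorem coe_g1_zpow (k : ℤ) :
    ((g1 ^ k : GL (Fin 2) ℤ) : Matrix (Fin 2) (Fin 2) ℤ) = !![1, 2 * k; 0, 1] := by
  induction k using Int.induction_on with
  | zero => simp [Matrix.one_fin_two]
  | succ n ih => rw [_root_.zpow_add_one, Units.val_mul, ih]; simp [g1, mul_add, add_comm]
  | pred n ih =>
    rw [_root_.zpow_sub_one, Units.val_mul, ih]; simp [g1, sub_eq_add_neg, mul_add, add_comm]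

theorem coe_g3_zpow (k : ℤ) :
    ((g3 ^ k : GL (Fin 2) ℤ) : Matrix (Fin 2) (Fin 2) ℤ) = !![1, 0; 2 * k, 1] := by
  induction k using Int.induction_on with
  | zero => simp [Matrix.one_fin_two]
  | succ n ih => rw [_root_.zpow_add_one, Units.val_mul, ih]; simp [g3, mul_add, add_comm]
  | pred n ih =>
    rw [_root_.zpow_sub_one, Units.val_mul, ih]; simp [g3, sub_eq_add_neg, mul_add, add_comm]

theorem g1_zpow_mul_apply_zero_zero (k : ℤ) (M : GL (Fin 2) ℤ) :
    (g1 ^ k * M) 0 0 = M 0 0 + 2 * k * M 1 0 := by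
  rw [Units.val_mul, coe_g1_zpow]
  simp [Matrix.mul_apply]

theorem g1_zpow_mul_apply_one_zero (k : ℤ) (M : GL (Fin 2) ℤ) :
    (g1 ^ k * M) 1 0 = M 1 0 := by
  rw [Units.val_mul, coe_g1_zpow]
  simp [Matrix.mul_apply]

theorem g3_zpow_mul_apply_one_zero (k : ℤ) (M : GL (Fin 2) ℤ) :
    (g3 ^ k * M) 1 0 = M 1 0 + 2 * k * M 0 0 := by
  rw [Units.val_mul, coe_g3_zpow]
  simp [Matrix.mul_apply, add_comm]

theorem mem_closure_g1_F1_F2_of_apply_one_zero_eq_zero {M : GL (Fin 2) ℤ}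
    (hM : M ∈ Gamma2 2) (hc : M 1 0 = 0) : M ∈ Subgroup.closure {g1, F1, F2} := by
  have hdet : IsUnit (M 0 0 * M 1 1) := by
    simpa [Matrix.det_fin_two, hc] using (Matrix.GeneralLinearGroup.det M).isUnit
  obtain ⟨ha, hd⟩ := IsUnit.mul_iff.mp hdet
  obtain ⟨-, hb_even, -, -⟩ := mem_gamma2_two_iff.mp hM
  obtain ⟨b, hb⟩ := even_iff_two_dvd.mp hb_even
  have h1 : g1 ∈ Subgroup.closure {g1, F1, F2} := Subgroup.subset_closure (by simp)
  have hF1 : F1 ∈ Subgroup.closure {g1, F1, F2} := Subgroup.subset_closure (by simp)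
  have hF2 : F2 ∈ Subgroup.closure {g1, F1, F2} := Subgroup.subset_closure (by simp)
  rcases Int.isUnit_iff.mp ha with ha | ha <;> rcases Int.isUnit_iff.mp hd with hd | hd
  · have : M = g1 ^ b := by
      ext i j
      simp only [coe_g1_zpow]
      fin_cases i <;> fin_cases j <;> simp [*]
    exact this ▸ zpow_mem h1 b
  · have : M = F2 * g1 ^ b := by
      ext i j
      simp only [Units.val_mul, coe_g1_zpow]
      fin_cases i <;> fin_cases j <;> simp [F2, *]
    exact this ▸ mul_mem hF2 (zpow_mem h1 b)
  · have : M = F1 * g1 ^ (-b) := by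
      ext i j
      simp only [Units.val_mul, coe_g1_zpow]
      fin_cases i <;> fin_cases j <;> simp [F1, *]
    exact this ▸ mul_mem hF1 (zpow_mem h1 _)
  · have : M = F1 * F2 * g1 ^ (-b) := by
      ext i j
      simp only [Units.val_mul, coe_g1_zpow]
      fin_cases i <;> fin_cases j <;> simp [F1, F2, *]
    exact this ▸ mul_mem (mul_mem hF1 hF2) (zpow_mem h1 _)

theorem exists_natAbs_g3_zpow_mul_g1_zpow_mul_apply_one_zero_lt {M : GL (Fin 2) ℤ}
    (hM : M ∈ Gamma2 2) (hc : M 1 0 ≠ 0) :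
    ∃ k l : ℤ, ((g3 ^ l * (g1 ^ k * M)) 1 0).natAbs < (M 1 0).natAbs := by
  obtain ⟨ha, -, hc2, -⟩ := mem_gamma2_two_iff.mp hM
  rw [Int.odd_iff] at ha
  rw [Int.even_iff] at hc2
  obtain ⟨k, hk⟩ := Int.exists_natAbs_add_two_mul_mul_le (M 0 0) hc
  have hk_ne : M 0 0 + 2 * k * M 1 0 ≠ 0 := by rw [mul_assoc]; omega
  have hk_lt : (M 0 0 + 2 * k * M 1 0).natAbs < (M 1 0).natAbs := by
    rw [mul_assoc] at hk ⊢; omega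
  obtain ⟨l, hl⟩ := Int.exists_natAbs_add_two_mul_mul_le (M 1 0) hk_ne
  refine ⟨k, l, ?_⟩
  rw [g3_zpow_mul_apply_one_zero, g1_zpow_mul_apply_zero_zero, g1_zpow_mul_apply_one_zero]
  exact hl.trans_lt hk_lt

theorem gamma2_le_closure : Gamma2 2 ≤ Subgroup.closure {g1, g3, F1, F2} := by
  set H := Subgroup.closure {g1, g3, F1, F2}
  have hg1 : g1 ∈ H := Subgroup.subset_closure (by simp)
  have hg3 : g3 ∈ H := Subgroup.subset_closure (by simp)
  intro M hM
  induction hn : (M 1 0).natAbs using Nat.strong_induction_on generalizing M with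
  | _ n ih =>
    by_cases hc : M 1 0 = 0
    · refine Subgroup.closure_mono ?_ (mem_closure_g1_F1_F2_of_apply_one_zero_eq_zero hM hc)
      exact Set.insert_subset_insert (Set.subset_insert g3 _)
    obtain ⟨k, l, hlt⟩ := exists_natAbs_g3_zpow_mul_g1_zpow_mul_apply_one_zero_lt hM hc
    have hP : g3 ^ l * (g1 ^ k * M) ∈ H :=
      ih _ (hn ▸ hlt) (mul_mem (zpow_mem (closure_le_gamma2 hg3) l)
        (mul_mem (zpow_mem (closure_le_gamma2 hg1) k) hM)) rfl
    rwa [H.mul_mem_cancel_left (zpow_mem hg3 l), H.mul_mem_cancel_left (zpow_mem hg1 k)] at hP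

theorem closure_g1_g2_g3_g4_eq_closure_g1_g3_F1_F2 :
    Subgroup.closure {g1, g2, g3, g4} = Subgroup.closure {g1, g3, F1, F2} := by
  have hg2 : g2 = g1⁻¹ * F2 := by decide
  have hg4 : g4 = g3⁻¹ * F1 := by decide
  have hF1 : F1 = g3 * g4 := by decide
  have hF2 : F2 = g1 * g2 := by decide
  apply le_antisymm <;> rw [Subgroup.closure_le] <;> rintro _ (rfl | rfl | rfl | rfl)
  · exact Subgroup.subset_closure (by simp)
  · rw [hg2]
    exact mul_mem (inv_mem (Subgroup.subset_closure (by simp)))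
      (Subgroup.subset_closure (by simp))
  · exact Subgroup.subset_closure (by simp)
  · rw [hg4]
    exact mul_mem (inv_mem (Subgroup.subset_closure (by simp)))
      (Subgroup.subset_closure (by simp))
  · exact Subgroup.subset_closure (by simp)
  · exact Subgroup.subset_closure (by simp)
  · rw [hF1]
    exact mul_mem (Subgroup.subset_closure (by simp)) (Subgroup.subset_closure (by simp))
  · rw [hF2]
    exact mul_mem (Subgroup.subset_closure (by simp)) (Subgroup.subset_closure (by simp))

/-- Γ₂(2) is generated by g₁, g₂, g₃, g₄; equivalently by E₁₂ = g₁, E₂₁ = g₃, F₁, F₂. -/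
theorem gamma2_two_generators :
    Subgroup.closure {g1, g2, g3, g4} = Gamma2 2 ∧
    Subgroup.closure {g1, g3, F1, F2} = Gamma2 2 := by
  have h : Subgroup.closure {g1, g3, F1, F2} = Gamma2 2 :=
    le_antisymm closure_le_gamma2 gamma2_le_closure
  exact ⟨closure_g1_g2_g3_g4_eq_closure_g1_g3_F1_F2.trans h, h⟩
end
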